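/- arXiv:2310.09992 — 2 statements merged into one kernel-verified Lean document; each statement's English description precedes it below -/
import Mathlib

section
/- Let q be a positive real number and G₀, G₁, G₂ complex numbers each of absolute value √q. For ζ = e^{2πi/3} and T_j := Σ_{i=0}^{2} ζ^{ji} G_i (j ∈ ℤ), one has T_{i+1}·T_{i+2} − T_i² = −(3 G₀G₁G₂ / q) · conj(T_i) for every i ∈ {0,1,2} (indices mod 3). -/
/-! Put `x = G₀`, `y = ζ^i G₁`, `z = ζ^{2i} G₂`, so that `T_i = x + y + z` and, since
`ζ² + ζ + 1 = 0`, `T_{i+1} T_{i+2} = x² + y² + z² - xy - yz - zx`; the left side is therefore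
`-3 (xy + yz + zx)`. As `|x|² = |y|² = |z|² = q`, one has `w · conj w = q` for each of them, whence
`xyz · conj (x + y + z) = q (xy + yz + zx)`. Finally `xyz = G₀G₁G₂` because `ζ^{3i} = 1`. -/

open ComplexConjugate

lemma cube_root_twisted_product_sub_sq {R : Type*} [CommRing R] {ω : R}
    (hω : ω ^ 2 + ω + 1 = 0) (x y z : R) :
    (x + ω * y + ω ^ 2 * z) * (x + ω ^ 2 * y + (ω ^ 2) ^ 2 * z) - (x + y + z) ^ 2
      = -3 * (x * y + y * z + z * x) := by
  linear_combination (x * y + x * z * (ω ^ 2 - ω + 1) + y ^ 2 * (ω - 1)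
    + y * z * (ω ^ 3 - ω + 1) + z ^ 2 * (ω - 1) * (ω ^ 3 + 1)) * hω

lemma Complex.mul_mul_mul_conj_add_add {r : ℝ} {x y z : ℂ}
    (hx : ‖x‖ = r) (hy : ‖y‖ = r) (hz : ‖z‖ = r) :
    x * y * z * conj (x + y + z) = r ^ 2 * (x * y + y * z + z * x) := by
  have key : ∀ w : ℂ, ‖w‖ = r → w * conj w = (r : ℂ) ^ 2 := fun w hw => by
    rw [Complex.mul_conj', hw]
  rw [map_add, map_add]
  linear_combination y * z * key x hx + x * z * key y hy + x * y * key z hz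

lemma Complex.cube_root_twisted_product_sub_sq_eq_neg_conj {r : ℝ} (hr : r ≠ 0)
    {ω x y z : ℂ} (hω : ω ^ 2 + ω + 1 = 0) (hx : ‖x‖ = r) (hy : ‖y‖ = r) (hz : ‖z‖ = r) :
    (x + ω * y + ω ^ 2 * z) * (x + ω ^ 2 * y + (ω ^ 2) ^ 2 * z) - (x + y + z) ^ 2
      = -(3 * (x * y * z) / (r : ℂ) ^ 2) * conj (x + y + z) := by
  have hr' : (r : ℂ) ≠ 0 := by exact_mod_cast hr
  rw [cube_root_twisted_product_sub_sq hω]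
  field_simp
  linear_combination mul_mul_mul_conj_add_add hx hy hz

lemma IsPrimitiveRoot.sq_add_self_add_one {R : Type*} [CommRing R] [IsDomain R] {ζ : R}
    (h : IsPrimitiveRoot ζ 3) : ζ ^ 2 + ζ + 1 = 0 := by
  have := h.geom_sum_eq_zero (by norm_num)
  simp only [Finset.sum_range_succ, Finset.sum_range_zero, pow_zero, pow_one] at this
  linear_combination this

theorem stmt0 (q : ℝ) (hq : 0 < q) (G₀ G₁ G₂ : ℂ)
    (h0 : ‖G₀‖ = Real.sqrt q) (h1 : ‖G₁‖ = Real.sqrt q)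
    (h2 : ‖G₂‖ = Real.sqrt q)
    (ζ : ℂ) (hζ : ζ = Complex.exp (2 * Real.pi * Complex.I / 3))
    (T : ℤ → ℂ) (hT : ∀ j : ℤ, T j = G₀ + ζ ^ j * G₁ + ζ ^ (2 * j) * G₂)
    (i : ℤ) :
    T (i + 1) * T (i + 2) - (T i) ^ 2
      = -(3 * G₀ * G₁ * G₂ / (q : ℂ)) * (starRingEnd ℂ) (T i) := by
  have hprim : IsPrimitiveRoot ζ 3 := by
    simpa [hζ] using Complex.isPrimitiveRoot_exp 3 (by norm_num)
  have hζ0 : ζ ≠ 0 := hprim.ne_zero (by norm_num)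
  set a := ζ ^ i
  have ha3 : a ^ 3 = 1 := by
    rw [← zpow_natCast, ← zpow_mul, mul_comm, zpow_mul, zpow_natCast, hprim.pow_eq_one, one_zpow]
  have ha : ‖a‖ = 1 := by rw [norm_zpow, hprim.norm'_eq_one (by norm_num), one_zpow]
  have hshift (k : ℕ) : T (i + k) = G₀ + ζ ^ k * (a * G₁) + (ζ ^ k) ^ 2 * (a ^ 2 * G₂) := by
    rw [hT, mul_comm (2 : ℤ), zpow_mul, zpow_add₀ hζ0, zpow_natCast, zpow_ofNat]
    ring
  have hT0 := hshift 0
  have hT1 := hshift 1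
  have hT2 := hshift 2
  simp only [Nat.cast_zero, add_zero, pow_zero, one_pow, one_mul] at hT0
  rw [Nat.cast_one, pow_one] at hT1
  rw [Nat.cast_ofNat] at hT2
  have hsqrt : Real.sqrt q ≠ 0 := (Real.sqrt_pos.mpr hq).ne'
  rw [hT0, hT1, hT2, Complex.cube_root_twisted_product_sub_sq_eq_neg_conj hsqrt
    hprim.sq_add_self_add_one h0 (by rw [norm_mul, ha, one_mul, h1])
    (by rw [norm_mul, norm_pow, ha, one_pow, one_mul, h2]), ← Complex.ofReal_pow,
    Real.sq_sqrt hq.le]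
  linear_combination (-3 * G₀ * G₁ * G₂ / q * conj (G₀ + a * G₁ + a ^ 2 * G₂)) * ha3
end

section
/- Let G₀, G₁, G₂ be complex numbers each of absolute value √q (q > 0), ζ = e^{2πi/3}, and T_j := G₀ + ζ^j G₁ + ζ^{2j} G₂. Then (T₀ ≠ 0 and T₁ ≠ 0 and T₂ ≠ 0) if and only if (T₀ ≠ 0 and G_i ≠ G_j for some i ≠ j). -/
/-!
Put `a = G₀`, `b = ζ^j G₁`, `c = ζ^{2j} G₂` for `j = 1, 2`. If `T_j = a + b + c = 0` with
`|a| = |b| = |c|`, then conjugating gives `1/a + 1/b + 1/c = 0`, i.e. `ab + bc + ca = 0`, and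
eliminating `c` yields `(b - ζa)(b - ζ²a) = 0`. So the three summands are `a, ζa, ζ²a` in some
order: either `G₀ = G₁ = G₂`, or the `G_k` are `G₀, ζG₀, ζ²G₀` in some order and `T₀ = 0`.
-/

open ComplexConjugate

theorem IsPrimitiveRoot.one_add_add_sq_eq_zero {R : Type*} [CommRing R] [IsDomain R] {ω : R}
    (hω : IsPrimitiveRoot ω 3) : 1 + ω + ω ^ 2 = 0 := by
  simpa [Finset.sum_range_succ] using hω.geom_sum_eq_zero (by norm_num)

namespace Complex

theorem mul_add_mul_add_mul_eq_zero_of_add_add_eq_zero {a b c : ℂ} (hab : ‖a‖ = ‖b‖)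
    (hac : ‖a‖ = ‖c‖) (h : a + b + c = 0) : a * b + b * c + c * a = 0 := by
  rcases eq_or_ne a 0 with rfl | ha
  · rw [norm_zero, eq_comm, norm_eq_zero] at hab hac
    simp [hab, hac]
  have hconj : conj a + conj b + conj c = 0 := by simpa using congrArg conj h
  have hb : b * conj b = (‖a‖ : ℂ) ^ 2 := by rw [hab]; exact RCLike.mul_conj b
  have hc : c * conj c = (‖a‖ : ℂ) ^ 2 := by rw [hac]; exact RCLike.mul_conj c
  have hr : (‖a‖ : ℂ) ^ 2 * (a * b + b * c + c * a) = 0 := by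
    linear_combination
      (a * b * c) * hconj - (b * c) * RCLike.mul_conj a - (c * a) * hb - (a * b) * hc
  exact (mul_eq_zero.mp hr).resolve_left (by simpa using ha)

theorem eq_mul_or_eq_sq_mul_of_add_add_eq_zero {ω a b c : ℂ} (hω : IsPrimitiveRoot ω 3)
    (hab : ‖a‖ = ‖b‖) (hac : ‖a‖ = ‖c‖) (h : a + b + c = 0) :
    (b = ω * a ∧ c = ω ^ 2 * a) ∨ (b = ω ^ 2 * a ∧ c = ω * a) := by
  have hω3 : ω ^ 3 = 1 := hω.pow_eq_one
  have hgeom : 1 + ω + ω ^ 2 = 0 := hω.one_add_add_sq_eq_zero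
  have hsym := mul_add_mul_add_mul_eq_zero_of_add_add_eq_zero hab hac h
  have hc : c = -(a + b) := by linear_combination h
  have hfactor : (b - ω * a) * (b - ω ^ 2 * a) = 0 := by
    rw [hc] at hsym
    linear_combination -hsym - a * b * hgeom + a ^ 2 * hω3
  rcases mul_eq_zero.mp hfactor with hb | hb
  · exact .inl ⟨by linear_combination hb, by linear_combination hc - hb - a * hgeom⟩
  · exact .inr ⟨by linear_combination hb, by linear_combination hc - hb - a * hgeom⟩

theorem add_mul_add_sq_mul_eq_zero_iff {ω x y z : ℂ} (hω : IsPrimitiveRoot ω 3)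
    (hxy : ‖x‖ = ‖y‖) (hxz : ‖x‖ = ‖z‖) (hsum : x + y + z ≠ 0) :
    x + ω * y + ω ^ 2 * z = 0 ↔ y = x ∧ z = x := by
  have hω3 : ω ^ 3 = 1 := hω.pow_eq_one
  have hgeom : 1 + ω + ω ^ 2 = 0 := hω.one_add_add_sq_eq_zero
  have hω0 : ω ≠ 0 := hω.ne_zero (by norm_num)
  have hnorm : ‖ω‖ = 1 := hω.norm'_eq_one (by norm_num)
  constructor
  · intro h
    rcases eq_mul_or_eq_sq_mul_of_add_add_eq_zero hω (a := x) (b := ω * y) (c := ω ^ 2 * z)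
      (by simp [hnorm, hxy]) (by simp [hnorm, hxz]) h with ⟨hy, hz⟩ | ⟨hy, hz⟩
    · exact ⟨mul_left_cancel₀ hω0 hy, mul_left_cancel₀ (pow_ne_zero 2 hω0) hz⟩
    · refine absurd ?_ hsum
      have hy' : y = ω * x := mul_left_cancel₀ hω0 (by linear_combination hy)
      have hz' : z = ω ^ 2 * x := by linear_combination ω * hz - z * hω3
      rw [hy', hz']
      linear_combination x * hgeom
  · rintro ⟨hy, hz⟩
    rw [hy, hz]
    linear_combination x * hgeom

end Complex

theorem Fin.exists_ne_and_apply_ne_iff {α : Type*} (G : Fin 3 → α) :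
    (∃ i j : Fin 3, i ≠ j ∧ G i ≠ G j) ↔ ¬(G 1 = G 0 ∧ G 2 = G 0) := by
  constructor
  · rintro ⟨i, j, -, hij⟩ ⟨h1, h2⟩
    fin_cases i <;> fin_cases j <;> simp_all
  · intro h
    by_cases h1 : G 1 = G 0
    · exact ⟨2, 0, by decide, fun h2 => h ⟨h1, h2⟩⟩
    · exact ⟨1, 0, by decide, h1⟩

theorem stmt4_general (q : ℝ) (G : Fin 3 → ℂ)
    (hG : ∀ i, ‖G i‖ = Real.sqrt q)
    (ζ : ℂ) (hζ : ζ = Complex.exp (2 * Real.pi * Complex.I / 3))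
    (T : ℕ → ℂ) (hT : ∀ j : ℕ, T j = G 0 + ζ ^ j * G 1 + ζ ^ (2 * j) * G 2) :
    (T 0 ≠ 0 ∧ T 1 ≠ 0 ∧ T 2 ≠ 0) ↔ (T 0 ≠ 0 ∧ ∃ i j : Fin 3, i ≠ j ∧ G i ≠ G j) := by
  have hζ3 : IsPrimitiveRoot ζ 3 := by
    simpa [hζ] using Complex.isPrimitiveRoot_exp 3 (by norm_num)
  have hT0 : T 0 = G 0 + G 1 + G 2 := by simp [hT]
  have hTj_eq_zero_iff (j : ℕ) (hj : j.Coprime 3) (h0 : T 0 ≠ 0) :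
      T j = 0 ↔ G 1 = G 0 ∧ G 2 = G 0 := by
    rw [hT, pow_mul']
    exact Complex.add_mul_add_sq_mul_eq_zero_iff (hζ3.pow_of_coprime j hj)
      (by rw [hG, hG]) (by rw [hG, hG]) (hT0 ▸ h0)
  rw [Fin.exists_ne_and_apply_ne_iff]
  constructor
  · rintro ⟨h0, h1, -⟩
    exact ⟨h0, (hTj_eq_zero_iff 1 (by norm_num) h0).not.mp h1⟩
  · rintro ⟨h0, hne⟩
    exact ⟨h0, (hTj_eq_zero_iff 1 (by norm_num) h0).not.mpr hne,
      (hTj_eq_zero_iff 2 (by norm_num) h0).not.mpr hne⟩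

theorem stmt4 (q : ℝ) (hq : 0 < q) (G : Fin 3 → ℂ)
    (hG : ∀ i, ‖G i‖ = Real.sqrt q)
    (ζ : ℂ) (hζ : ζ = Complex.exp (2 * Real.pi * Complex.I / 3))
    (T : ℕ → ℂ) (hT : ∀ j : ℕ, T j = G 0 + ζ ^ j * G 1 + ζ ^ (2 * j) * G 2) :
    (T 0 ≠ 0 ∧ T 1 ≠ 0 ∧ T 2 ≠ 0) ↔ (T 0 ≠ 0 ∧ ∃ i j : Fin 3, i ≠ j ∧ G i ≠ G j) :=
  stmt4_general q G hG ζ hζ T hT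
end
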